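/- arXiv:1405.3716 — 4 statements merged into one kernel-verified Lean document; each statement's English description precedes it below -/
import Mathlib

section
/- Let F_q be a finite field with q elements, q an odd prime power, and let n ≥ 1 with gcd(n, q) = 1. Let u = (1/n)·Σ_{l=0}^{n−1} x^l ∈ F_q D_{2n} (the evaluation at the rotation generator x of the polynomial e_{x−1} = (1/n)(x^n−1)/(x−1)). Then ((1+y)/2)·u and ((1−y)/2)·u are primitive central idempotents of F_q D_{2n}. Moreover, if n is even and v = (1/n)·Σ_{l=0}^{n−1} (−1)^l x^l, then ((1+y)/2)·v and ((1−y)/2)·v are also primitive central idempotents of F_q D_{2n}. -/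
open Polynomial

/-- A primitive central idempotent of a ring: a nonzero central idempotent that is not
the sum of two nonzero orthogonal central idempotents. -/
def IsPrimitiveCentralIdempotent {R : Type*} [Ring R] (e : R) : Prop :=
  e ≠ 0 ∧ IsIdempotentElem e ∧ e ∈ Set.center R ∧
    ∀ a b : R, a ≠ 0 → b ≠ 0 → IsIdempotentElem a → IsIdempotentElem b →
      a ∈ Set.center R → b ∈ Set.center R → a * b = 0 → e ≠ a + b

/-- The rotation generator `x` of `D_{2n}` inside the group algebra. -/
noncomputable def rotGen (F : Type) [Field F] (n : ℕ) : MonoidAlgebra F (DihedralGroup n) :=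
  MonoidAlgebra.of F (DihedralGroup n) (DihedralGroup.r 1)

/-- The reflection generator `y` of `D_{2n}` inside the group algebra. -/
noncomputable def reflGen (F : Type) [Field F] (n : ℕ) : MonoidAlgebra F (DihedralGroup n) :=
  MonoidAlgebra.of F (DihedralGroup n) (DihedralGroup.sr 0)

/-!
For a linear character `χ : G →* k` of a finite group with `|G|` invertible in `k`, the element
`e_χ = |G|⁻¹ Σ χ(g⁻¹) g` satisfies `x e_χ = e_χ x = χ(x) e_χ` for every `x ∈ k[G]` (with `χ`
extended linearly). So `e_χ` is a central idempotent with `k[G] e_χ = k e_χ`, and it cannot split: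
an orthogonal idempotent summand `a = a e_χ` is an idempotent scalar multiple of `e_χ`, i.e. `0` or
`e_χ`. The four elements of the theorem are exactly the `e_χ` for the characters of `D_{2n}` sending
`(x, y)` to `(±1, ±1)` (those with `x ↦ -1` exist only for even `n`), and `|D_{2n}| = 2n` is
invertible in `F_q` since `q` is odd and prime to `n`.
-/

theorem IsPrimitiveCentralIdempotent.of_mul_eq_smul {k A : Type*} [Field k] [Ring A]
    [Algebra k A] {e : A} (f : A → k) (he : e ≠ 0) (he_idem : IsIdempotentElem e)
    (hleft : ∀ x, x * e = f x • e) (hright : ∀ x, e * x = f x • e) :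
    IsPrimitiveCentralIdempotent e := by
  refine ⟨he, he_idem, Semigroup.mem_center_iff.mpr fun x => by rw [hleft, hright], ?_⟩
  intro a b ha hb ha_idem _ _ _ hab hsum
  have hae : a = f a • e := by
    rw [← hleft, hsum, mul_add, ha_idem.eq, hab, add_zero]
  have hfa : IsIdempotentElem (f a) := by
    refine smul_left_injective k he ?_
    calc (f a * f a) • e = (f a • e) * (f a • e) := by
          rw [smul_mul_smul_comm, he_idem.eq]
      _ = f a • e := by rw [← hae, ha_idem.eq]
  rcases IsIdempotentElem.iff_eq_zero_or_one.mp hfa with h0 | h1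
  · exact ha (by rw [hae, h0, zero_smul])
  · rw [hae, h1, one_smul] at hsum
    exact hb (left_eq_add.mp hsum)

namespace MonoidAlgebra

variable {k G : Type*} [Field k] [Group G] [Fintype G]

noncomputable def charIdempotent (χ : G →* k) : MonoidAlgebra k G :=
  (Fintype.card G : k)⁻¹ • ∑ g, single g (χ g⁻¹)

variable (χ : G →* k)

theorem single_one_mul_charIdempotent (h : G) :
    single h 1 * charIdempotent χ = χ h • charIdempotent χ := by
  rw [charIdempotent, mul_smul_comm, smul_comm (χ h)]
  congr 1
  rw [Finset.mul_sum, Finset.smul_sum]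
  apply Fintype.sum_equiv (Equiv.mulLeft h)
  intro g
  rw [Equiv.coe_mulLeft, single_mul_single, one_mul, smul_single', mul_inv_rev, map_mul,
    mul_left_comm, ← map_mul, mul_inv_cancel, map_one, mul_one]

theorem charIdempotent_mul_single_one (h : G) :
    charIdempotent χ * single h 1 = χ h • charIdempotent χ := by
  rw [charIdempotent, smul_mul_assoc, smul_comm (χ h)]
  congr 1
  rw [Finset.sum_mul, Finset.smul_sum]
  apply Fintype.sum_equiv (Equiv.mulRight h)
  intro g
  rw [Equiv.coe_mulRight, single_mul_single, mul_one, smul_single', mul_inv_rev, map_mul,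
    ← mul_assoc, ← map_mul, mul_inv_cancel, map_one, one_mul]

theorem mul_charIdempotent (x : MonoidAlgebra k G) :
    x * charIdempotent χ = lift k k G χ x • charIdempotent χ := by
  induction x using induction_linear with
  | zero => simp
  | add x y hx hy => rw [add_mul, hx, hy, map_add, add_smul]
  | single g c =>
    rw [← mul_one c, ← smul_single', smul_mul_assoc, single_one_mul_charIdempotent, map_smul,
      lift_single, smul_smul, one_smul, smul_eq_mul]

theorem charIdempotent_mul (x : MonoidAlgebra k G) :
    charIdempotent χ * x = lift k k G χ x • charIdempotent χ := by
  induction x using induction_linear with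
  | zero => simp
  | add x y hx hy => rw [mul_add, hx, hy, map_add, add_smul]
  | single g c =>
    rw [← mul_one c, ← smul_single', mul_smul_comm, charIdempotent_mul_single_one, map_smul,
      lift_single, smul_smul, one_smul, smul_eq_mul]

variable {χ}

theorem lift_charIdempotent (hG : (Fintype.card G : k) ≠ 0) :
    lift k k G χ (charIdempotent χ) = 1 := by
  simp only [charIdempotent, map_smul, map_sum, lift_single, smul_eq_mul, ← map_mul,
    inv_mul_cancel, map_one, Finset.sum_const, Finset.card_univ, nsmul_eq_mul, mul_one]
  exact inv_mul_cancel₀ hG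

theorem charIdempotent_ne_zero (hG : (Fintype.card G : k) ≠ 0) : charIdempotent χ ≠ 0 := by
  classical
  intro h
  have := congrArg (fun x => x.coeff 1) h
  simp [charIdempotent, coeff_sum, Finsupp.single_apply, hG] at this

theorem isPrimitiveCentralIdempotent_charIdempotent (hG : (Fintype.card G : k) ≠ 0) :
    IsPrimitiveCentralIdempotent (charIdempotent χ) := by
  refine .of_mul_eq_smul (lift k k G χ) (charIdempotent_ne_zero hG) ?_ (mul_charIdempotent χ)
    (charIdempotent_mul χ)
  rw [IsIdempotentElem, mul_charIdempotent, lift_charIdempotent hG, one_smul]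

end MonoidAlgebra

theorem ZMod.sum_range_natCast {M : Type*} [AddCommMonoid M] {n : ℕ} [NeZero n]
    (f : ZMod n → M) : ∑ l ∈ Finset.range n, f l = ∑ i, f i :=
  Finset.sum_nbij' Nat.cast ZMod.val (by simp) (by simp [ZMod.val_lt])
    (fun _ hl => ZMod.val_cast_of_lt (Finset.mem_range.mp hl)) (fun i _ => ZMod.natCast_zmod_val i)
    (fun _ _ => rfl)

theorem FiniteField.natCast_ne_zero_of_coprime_card {K : Type*} [Field K] [Fintype K] {m : ℕ}
    (hm : m.Coprime (Fintype.card K)) : (m : K) ≠ 0 := fun h =>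
  CharP.ringChar_ne_one <|
    Nat.eq_one_of_dvd_coprimes hm (ringChar.dvd h) (ringChar.dvd (FiniteField.cast_card_eq_zero K))

namespace DihedralGroup

variable {n : ℕ}

section CommMonoid

variable {M : Type*} [CommMonoid M]

theorem map_inv_eq_map (χ : DihedralGroup n →* M) (g : DihedralGroup n) : χ g⁻¹ = χ g := by
  rcases g with i | i
  · have hconj : (r i)⁻¹ = sr 0 * r i * sr 0 := by simp [inv_r]
    rw [hconj, map_mul, map_mul, mul_right_comm, ← map_mul, sr_mul_self, map_one, one_mul]
  · rw [inv_sr]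

variable [NeZero n]

-- `a * a = 1` is forced by `sr 0 * r 1 * sr 0 = (r 1)⁻¹` in a commutative target.
def liftComm (a b : M) (ha : a ^ n = 1) (ha2 : a * a = 1) (hb : b * b = 1) :
    DihedralGroup n →* M where
  toFun
    | r i => a ^ i.val
    | sr i => b * a ^ i.val
  map_one' := by
    change a ^ (0 : ZMod n).val = 1
    rw [ZMod.val_zero, pow_zero]
  map_mul' := by
    have hadd (i j : ZMod n) : a ^ (i + j).val = a ^ i.val * a ^ j.val := by
      rw [ZMod.val_add, ← pow_eq_pow_mod _ ha, pow_add]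
    have hsub (i j : ZMod n) : a ^ (j - i).val = a ^ i.val * a ^ j.val := by
      calc a ^ (j - i).val = a ^ (j - i).val * (a ^ i.val * a ^ i.val) := by
            rw [← mul_pow, ha2, one_pow, mul_one]
        _ = a ^ i.val * a ^ (j - i + i).val := by rw [hadd]; ac_rfl
        _ = a ^ i.val * a ^ j.val := by rw [sub_add_cancel]
    rintro (i | i) (j | j)
    · simp only [r_mul_r, hadd]
    · simp only [r_mul_sr, hsub]; ac_rfl
    · simp only [sr_mul_r, hadd]; ac_rfl
    · simp only [sr_mul_sr, hsub]
      rw [mul_mul_mul_comm, hb, one_mul]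

theorem liftComm_r_one (a b : M) (ha : a ^ n = 1) (ha2 : a * a = 1) (hb : b * b = 1) :
    liftComm a b ha ha2 hb (r 1) = a := by
  change a ^ (1 : ZMod n).val = a
  rw [ZMod.val_one_eq_one_mod, ← pow_eq_pow_mod _ ha, pow_one]

theorem liftComm_sr_zero (a b : M) (ha : a ^ n = 1) (ha2 : a * a = 1) (hb : b * b = 1) :
    liftComm a b ha ha2 hb (sr 0) = b := by
  change b * a ^ (0 : ZMod n).val = b
  rw [ZMod.val_zero, pow_zero, mul_one]

end CommMonoid

open MonoidAlgebra

variable [NeZero n] {F : Type} [Field F]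

theorem sum_rotGen_pow_eq (χ : DihedralGroup n →* F) :
    ∑ l ∈ Finset.range n, χ (r 1) ^ l • rotGen F n ^ l = ∑ i, single (r i) (χ (r i)) := by
  rw [← ZMod.sum_range_natCast]
  refine Finset.sum_congr rfl fun l _ => ?_
  rw [rotGen, ← map_pow, ← map_pow, r_one_pow, of_apply, smul_single', mul_one]

theorem one_add_smul_reflGen_mul (χ : DihedralGroup n →* F) :
    (1 + χ (sr 0) • reflGen F n) * ∑ i, single (r i) (χ (r i)) = ∑ g, single g (χ g) := by
  rw [add_mul, one_mul, smul_mul_assoc, Finset.mul_sum, Finset.smul_sum,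
    ← equivSum.symm.sum_comp, Fintype.sum_sum_type]
  congr 1
  refine Finset.sum_congr rfl fun i _ => ?_
  rw [reflGen, of_apply, single_mul_single, sr_mul_r, zero_add, one_mul, smul_single', ← map_mul,
    sr_mul_r, zero_add]
  rfl

theorem charIdempotent_eq (χ : DihedralGroup n →* F) :
    charIdempotent χ = ((2 : F)⁻¹ • (1 + χ (sr 0) • reflGen F n)) *
      ((n : F)⁻¹ • ∑ l ∈ Finset.range n, χ (r 1) ^ l • rotGen F n ^ l) := by
  rw [smul_mul_smul_comm, sum_rotGen_pow_eq, one_add_smul_reflGen_mul, charIdempotent, card,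
    Nat.cast_mul, Nat.cast_ofNat, mul_inv]
  simp only [map_inv_eq_map]

theorem isPrimitiveCentralIdempotent_of_sq_eq_one (a b : F) (ha : a ^ n = 1) (ha2 : a * a = 1)
    (hb : b * b = 1) (hG : (Fintype.card (DihedralGroup n) : F) ≠ 0) :
    IsPrimitiveCentralIdempotent (((2 : F)⁻¹ • (1 + b • reflGen F n)) *
      ((n : F)⁻¹ • ∑ l ∈ Finset.range n, a ^ l • rotGen F n ^ l)) := by
  have := isPrimitiveCentralIdempotent_charIdempotent
    (χ := liftComm a b ha ha2 hb) hG
  rwa [charIdempotent_eq, liftComm_r_one, liftComm_sr_zero] at this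

end DihedralGroup

/-- with `u = (1/n)·Σ x^l`, the elements `((1±y)/2)·u` are primitive central
idempotents of `F_q D_{2n}`; if moreover `n` is even and `v = (1/n)·Σ (-1)^l x^l`, then
`((1±y)/2)·v` are also primitive central idempotents. -/
theorem stmt_4 (F : Type) [Field F] [Fintype F] (q n : ℕ)
    (hq : Fintype.card F = q) (hqodd : Odd q) (hn : 1 ≤ n) (hco : Nat.Coprime n q)
    (u : MonoidAlgebra F (DihedralGroup n))
    (hu : u = (n : F)⁻¹ • ∑ l ∈ Finset.range n, rotGen F n ^ l) :
    IsPrimitiveCentralIdempotent (((2 : F)⁻¹ • (1 + reflGen F n)) * u) ∧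
    IsPrimitiveCentralIdempotent (((2 : F)⁻¹ • (1 - reflGen F n)) * u) ∧
    (Even n → ∀ v : MonoidAlgebra F (DihedralGroup n),
      v = (n : F)⁻¹ • ∑ l ∈ Finset.range n, ((-1 : F) ^ l) • rotGen F n ^ l →
      IsPrimitiveCentralIdempotent (((2 : F)⁻¹ • (1 + reflGen F n)) * v) ∧
      IsPrimitiveCentralIdempotent (((2 : F)⁻¹ • (1 - reflGen F n)) * v)) := by
  subst hq hu
  have : NeZero n := ⟨by omega⟩
  have hG : (Fintype.card (DihedralGroup n) : F) ≠ 0 := by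
    rw [DihedralGroup.card, Nat.cast_mul, Nat.cast_ofNat]
    exact mul_ne_zero
      (FiniteField.natCast_ne_zero_of_coprime_card (Nat.coprime_two_left.mpr hqodd))
      (FiniteField.natCast_ne_zero_of_coprime_card hco)
  have key (a b : F) (ha : a ^ n = 1) (ha2 : a * a = 1) (hb : b * b = 1) :=
    DihedralGroup.isPrimitiveCentralIdempotent_of_sq_eq_one a b ha ha2 hb hG
  refine ⟨?_, ?_, fun hev v hv => hv ▸ ⟨?_, ?_⟩⟩
  · simpa using key 1 1 (one_pow n) (mul_one 1) (mul_one 1)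
  · simpa [sub_eq_add_neg] using key 1 (-1) (one_pow n) (mul_one 1) (by norm_num)
  · simpa using key (-1) 1 hev.neg_one_pow (by norm_num) (mul_one 1)
  · simpa [sub_eq_add_neg] using key (-1) (-1) hev.neg_one_pow (by norm_num) (by norm_num)
end

section
/- Let n ≥ 1, let g be a monic divisor of x^n − 1 in ℚ[x], and set f = (x^n − 1)/g. Define e_f = −(1/n)·((f*)′)*·g ∈ ℚ[x], where g* denotes the reciprocal polynomial and ′ the formal derivative. Then, in the quotient ring ℚ[x]/⟨x^n − 1⟩, the image of e_f is the principal idempotent of the ideal I generated by g: e_f² = e_f, e_f ∈ I, and e_f·h = h for every h ∈ I. -/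
/-!
Write `f * g = X ^ n - 1` and `d = deg f`. Since `f(0) ≠ 0`, reversing the derivative of `f*`
gives `d f - X f'`, and differentiating `f g = X ^ n - 1` gives `X f' g = n X ^ n - X f g'`.
Hence `e_f = 1 + (X ^ n - 1) - (1/n) f (d g + X g') ≡ 1 (mod f)`. Together with `g ∣ e_f`
this gives `e_f g c ≡ g c` modulo `f g = X ^ n - 1` for every `c`, which is all three claims.
-/

open Polynomial

theorem Polynomial.coeff_X_mul_derivative {R : Type*} [CommSemiring R] (p : R[X]) (k : ℕ) :
    (X * derivative p).coeff k = k * p.coeff k := by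
  rcases k with _ | k
  · simp
  · rw [coeff_X_mul, coeff_derivative, mul_comm]; push_cast; rfl

theorem Polynomial.reflect_derivative_reflect {R : Type*} [CommRing R] {p : R[X]} {N : ℕ}
    (hp : p.natDegree ≤ N) :
    reflect (N - 1) (derivative (reflect N p)) = C (N : R) * p - X * derivative p := by
  ext k
  rw [coeff_reflect, coeff_sub, coeff_C_mul, coeff_X_mul_derivative, ← sub_mul]
  rcases lt_or_ge k N with hk | hk
  · obtain ⟨j, rfl⟩ := Nat.exists_eq_add_of_lt hk
    rw [revAt_le (by omega), coeff_derivative, coeff_reflect, revAt_le (by omega),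
      show k + j + 1 - (k + j + 1 - 1 - k + 1) = k by omega, mul_comm,
      show k + j + 1 - 1 - k = j by omega]
    push_cast
    ring
  · have hrev : revAt (N - 1) k = k := by
      rw [← revAtFun_eq, revAtFun]
      split_ifs <;> omega
    rw [hrev, coeff_derivative, coeff_reflect, revAt_eq_self_of_lt (by omega),
      coeff_eq_zero_of_natDegree_lt (by omega), zero_mul]
    rcases hk.lt_or_eq with hk | rfl
    · rw [coeff_eq_zero_of_natDegree_lt (by omega), mul_zero]
    · rw [sub_self, zero_mul]

theorem Polynomial.reverse_derivative_reverse {R : Type*} [CommRing R] [IsAddTorsionFree R]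
    {p : R[X]} (hp : p.coeff 0 ≠ 0) :
    (derivative p.reverse).reverse = C (p.natDegree : R) * p - X * derivative p := by
  have hdeg : p.reverse.natDegree = p.natDegree := by
    rw [reverse_natDegree, natTrailingDegree_eq_zero.mpr (Or.inr hp), Nat.sub_zero]
  rw [reverse, natDegree_derivative, hdeg]
  exact reflect_derivative_reflect le_rfl

theorem Polynomial.dvd_neg_C_inv_mul_reverse_derivative_reverse_mul_sub_one {K : Type*} [Field K]
    [CharZero K] {n : ℕ} (hn : n ≠ 0) {f g : K[X]} (hfg : f * g = X ^ n - 1) :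
    f ∣ -C (n : K)⁻¹ * (derivative f.reverse).reverse * g - 1 := by
  have hf0 : f.coeff 0 ≠ 0 := by
    intro h
    have := congrArg (coeff · 0) hfg
    simp [mul_coeff_zero, h, hn.symm] at this
  have hderiv : X * (derivative f * g + f * derivative g) = C (n : K) * X ^ n := by
    rw [← derivative_mul, hfg, derivative_sub, derivative_X_pow, derivative_one, sub_zero,
      mul_left_comm, ← pow_succ', Nat.sub_add_cancel (Nat.one_le_iff_ne_zero.mpr hn)]
  have hn' : C (n : K)⁻¹ * C (n : K) = 1 := by
    rw [← C_mul, inv_mul_cancel₀ (Nat.cast_ne_zero.mpr hn), C_1]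
  refine ⟨g - C (n : K)⁻¹ * (C (f.natDegree : K) * g + X * derivative g), ?_⟩
  rw [reverse_derivative_reverse hf0]
  linear_combination C (n : K)⁻¹ * hderiv + X ^ n * hn' - hfg

section
variable {A : Type*} [CommRing A] {f g e : A}

theorem Ideal.Quotient.mk_mul_eq_self_of_dvd_sub_one (hf : f ∣ e - 1) {h : A ⧸ span {f * g}}
    (hh : h ∈ span {mk (span {f * g}) g}) : mk (span {f * g}) e * h = h := by
  obtain ⟨c, rfl⟩ := mem_span_singleton.mp hh
  obtain ⟨c, rfl⟩ := mk_surjective c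
  obtain ⟨d, hd⟩ := hf
  rw [← map_mul, ← map_mul, ← sub_eq_zero, ← map_sub, eq_zero_iff_mem, mem_span_singleton]
  exact ⟨d * c, by linear_combination g * c * hd⟩

theorem Ideal.Quotient.mk_mem_span_mk_of_dvd (I : Ideal A) (hg : g ∣ e) :
    mk I e ∈ span {mk I g} :=
  mem_span_singleton.mpr (map_dvd _ hg)

theorem Ideal.Quotient.isIdempotentElem_mk_of_dvd (hg : g ∣ e) (hf : f ∣ e - 1) :
    IsIdempotentElem (mk (span {f * g}) e) :=
  mk_mul_eq_self_of_dvd_sub_one hf (mk_mem_span_mk_of_dvd _ hg)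

end

theorem stmt_9_general (n : ℕ) (hn : 1 ≤ n)
    (g : ℚ[X]) (hdvd : g ∣ X ^ n - 1)
    (f : ℚ[X]) (hf : f = (X ^ n - 1) / g)
    (e : ℚ[X]) (he : e = -(C ((n : ℚ)⁻¹)) * (f.reverse.derivative).reverse * g) :
    IsIdempotentElem (Ideal.Quotient.mk (Ideal.span {(X : ℚ[X]) ^ n - 1}) e) ∧
    Ideal.Quotient.mk (Ideal.span {(X : ℚ[X]) ^ n - 1}) e ∈
      Ideal.span {Ideal.Quotient.mk (Ideal.span {(X : ℚ[X]) ^ n - 1}) g} ∧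
    ∀ h ∈ Ideal.span {Ideal.Quotient.mk (Ideal.span {(X : ℚ[X]) ^ n - 1}) g},
      Ideal.Quotient.mk (Ideal.span {(X : ℚ[X]) ^ n - 1}) e * h = h := by
  have hn0 : n ≠ 0 := Nat.one_le_iff_ne_zero.mp hn
  have hfg : f * g = X ^ n - 1 := by
    have hg0 : g ≠ 0 :=
      ne_zero_of_dvd_ne_zero (by simpa using X_pow_sub_C_ne_zero hn (1 : ℚ)) hdvd
    rw [hf, mul_comm, EuclideanDomain.mul_div_cancel' hg0 hdvd]
  have hge : g ∣ e := he ▸ dvd_mul_left g _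
  have hfe : f ∣ e - 1 := he ▸ dvd_neg_C_inv_mul_reverse_derivative_reverse_mul_sub_one hn0 hfg
  rw [← hfg]
  exact ⟨Ideal.Quotient.isIdempotentElem_mk_of_dvd hge hfe,
    Ideal.Quotient.mk_mem_span_mk_of_dvd _ hge,
    fun _ => Ideal.Quotient.mk_mul_eq_self_of_dvd_sub_one hfe⟩

/-- For a monic divisor `g` of `X^n - 1` over `ℚ` and `f = (X^n - 1)/g`,
the polynomial `e_f = -(1/n) * ((f*)')* * g` maps to the principal idempotent of the
ideal generated by `g` in `ℚ[X]/(X^n - 1)`. -/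
theorem stmt_9 (n : ℕ) (hn : 1 ≤ n)
    (g : ℚ[X]) (hmonic : g.Monic) (hdvd : g ∣ X ^ n - 1)
    (f : ℚ[X]) (hf : f = (X ^ n - 1) / g)
    (e : ℚ[X]) (he : e = -(C ((n : ℚ)⁻¹)) * (f.reverse.derivative).reverse * g) :
    IsIdempotentElem (Ideal.Quotient.mk (Ideal.span {(X : ℚ[X]) ^ n - 1}) e) ∧
    Ideal.Quotient.mk (Ideal.span {(X : ℚ[X]) ^ n - 1}) e ∈
      Ideal.span {Ideal.Quotient.mk (Ideal.span {(X : ℚ[X]) ^ n - 1}) g} ∧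
    ∀ h ∈ Ideal.span {Ideal.Quotient.mk (Ideal.span {(X : ℚ[X]) ^ n - 1}) g},
      Ideal.Quotient.mk (Ideal.span {(X : ℚ[X]) ^ n - 1}) e * h = h :=
  stmt_9_general n hn g hdvd f hf e he
end

section
/- Let F_q be a finite field with q elements and let n ≥ 1 be such that every prime divisor of n divides q − 1 and such that 8 ∤ n or q ≢ 3 (mod 4). Set κ = gcd(n, q − 1), m = n/κ, l = (q − 1)/κ, and let θ be a generator of the multiplicative group F_q^*. Then x^n − 1 = ∏_{t | m} ∏_{1 ≤ u ≤ κ, gcd(u,t) = 1} (x^t − θ^{u·l}) in F_q[x], and each factor x^t − θ^{u·l} appearing in this product is irreducible over F_q. -/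
open Polynomial IntermediateField

set_option maxHeartbeats 2000000

section aux

theorem ffVC (t : ℕ) : ∀ (K : Type) (_ : Field K) (_ : Fintype K) (a : K), 1 ≤ t →
    (∀ p : ℕ, p.Prime → p ∣ t → ∀ b : K, b ^ p ≠ a) →
    (4 ∣ t → Fintype.card K % 4 = 1) →
    Irreducible (X ^ t - C a) := by
  induction t using Nat.strong_induction_on with
  | _ t IH =>
  intro K _ _ a ht h1 h2
  rcases Nat.even_or_odd t with he | ho
  · obtain ⟨s, hs⟩ := he
    have hts : t = s * 2 := by omega
    have hs1 : 1 ≤ s := by omega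
    have hslt : s < t := by omega
    have h2t : 2 ∣ t := ⟨s, by omega⟩
    have h2irr : Irreducible (X ^ 2 - C a) :=
      X_pow_sub_C_irreducible_of_prime Nat.prime_two (h1 2 Nat.prime_two h2t)
    have hqodd : Fintype.card K % 2 = 1 := by
      rcases Nat.even_or_odd (Fintype.card K) with hev | hod
      · exfalso
        rw [Nat.even_iff] at hev
        have hchar : ringChar K = 2 := FiniteField.even_card_iff_char_two.mpr hev
        obtain ⟨c, hc⟩ := FiniteField.isSquare_of_char_two hchar a
        exact h1 2 Nat.prime_two h2t c (by rw [pow_two, hc])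
      · exact Nat.odd_iff.mp hod
    rw [hts]
    apply X_pow_mul_sub_C_irreducible h2irr
    intro E _ _ x hx
    have hint : IsIntegral K x := not_not.mp fun h ↦ by
      simpa only [degree_zero, degree_X_pow_sub_C (by norm_num : 0 < 2), WithBot.natCast_ne_bot]
        using congr_arg degree (hx.symm.trans (dif_neg h))
    have hfd : FiniteDimensional K K⟮x⟯ := adjoin.finiteDimensional hint
    have hfin : Finite K⟮x⟯ := Module.finite_of_finite K
    have hFT : Fintype K⟮x⟯ := Fintype.ofFinite _
    have hrank : Module.finrank K K⟮x⟯ = 2 := by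
      rw [adjoin.finrank hint, hx, natDegree_X_pow_sub_C]
    have hcard : Fintype.card K⟮x⟯ = Fintype.card K ^ 2 := by
      rw [Module.card_eq_pow_finrank (K := K) (V := K⟮x⟯), hrank]
    have hnormgen : (Algebra.norm K) (AdjoinSimple.gen K x) = -a := by
      rw [← adjoin.powerBasis_gen hint, Algebra.PowerBasis.norm_gen_eq_coeff_zero_minpoly]
      simp [adjoin.powerBasis_gen, minpoly_gen, hx, coeff_X_pow]
    apply IH s hslt K⟮x⟯ _ hFT (AdjoinSimple.gen K x) hs1
    · intro p hp hps b hb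
      have hnb : (Algebra.norm K b) ^ p = -a := by
        rw [← map_pow, hb, hnormgen]
      rcases eq_or_ne p 2 with rfl | hp2
      · have h4t : 4 ∣ t := by omega
        obtain ⟨i, hi⟩ := FiniteField.isSquare_neg_one_iff.mpr (by rw [h2 h4t]; omega)
        exact h1 2 Nat.prime_two h2t (i * Algebra.norm K b)
          (by rw [mul_pow, pow_two, pow_two, ← hi]; rw [pow_two] at hnb; rw [hnb]; ring)
      · have hpodd : Odd p := hp.odd_of_ne_two hp2
        exact h1 p hp (dvd_mul_of_dvd_left hps 2 |>.trans (by rw [hts]))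
          (-(Algebra.norm K b)) (by rw [hpodd.neg_pow, hnb, neg_neg])
    · intro _
      rw [hcard, Nat.pow_mod]
      have : Fintype.card K % 4 = 1 ∨ Fintype.card K % 4 = 3 := by omega
      rcases this with h | h <;> rw [h]
  · exact X_pow_sub_C_irreducible_of_odd ho h1

lemma count_blocks (r : ℕ) : ∀ (k a : ℕ),
    ((Finset.Ico a (a + k * r)).filter (fun u => r.Coprime u)).card = k * r.totient := by
  intro k
  induction k with
  | zero => simp
  | succ k ih =>
    intro a
    have h : a + (k + 1) * r = (a + k * r) + r := by ring
    rw [h, ← Finset.Ico_union_Ico_eq_Ico (Nat.le_add_right a (k * r)) (Nat.le_add_right _ r),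
      Finset.filter_union, Finset.card_union_of_disjoint
        (Finset.disjoint_filter_filter (Finset.Ico_disjoint_Ico_consecutive a _ _)),
      ih, Nat.filter_coprime_Ico_eq_totient]
    ring

lemma coprime_radical_iff (t u : ℕ) (ht : t ≠ 0) :
    (∏ p ∈ t.primeFactors, p).Coprime u ↔ Nat.Coprime u t := by
  refine Iff.trans ?_ Nat.coprime_comm
  constructor
  · intro h
    by_contra hc
    obtain ⟨p, hp, hpt, hpu⟩ := Nat.Prime.not_coprime_iff_dvd.mp hc
    have hmem : p ∈ t.primeFactors := Nat.mem_primeFactors.mpr ⟨hp, hpt, ht⟩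
    exact Nat.Prime.not_coprime_iff_dvd.mpr ⟨p, hp, Finset.dvd_prod_of_mem _ hmem, hpu⟩ h
  · intro h
    by_contra hc
    obtain ⟨p, hp, hpr, hpu⟩ := Nat.Prime.not_coprime_iff_dvd.mp hc
    have : p ∣ t := by
      obtain ⟨q, hq, hpq⟩ := (Prime.dvd_finset_prod_iff hp.prime _).mp hpr
      have := (Nat.prime_dvd_prime_iff_eq hp (Nat.prime_of_mem_primeFactors hq)).mp hpq
      exact this ▸ Nat.dvd_of_mem_primeFactors hq
    exact Nat.Prime.not_coprime_iff_dvd.mpr ⟨p, hp, this, hpu⟩ h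

lemma totient_aux : ∀ (w : ℕ), 0 < w → ∀ r : ℕ, (∀ p : ℕ, p.Prime → p ∣ w → p ∣ r) →
    (r * w).totient = w * r.totient := by
  intro w
  induction w using Nat.strong_induction_on with
  | _ w IH =>
  intro hw r hpr
  rcases eq_or_ne w 1 with rfl | hw1
  · simp
  · obtain ⟨p, hp, d, hd⟩ := Nat.exists_prime_and_dvd hw1
    have hd1 : 0 < d := Nat.pos_of_ne_zero (fun h0 => by subst h0; simp at hd; omega)
    have hdlt : d < w := by
      rw [hd]; calc d < 2 * d := by omega
        _ ≤ p * d := Nat.mul_le_mul_right d hp.two_le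
    have hpd : p ∣ r := hpr p hp ⟨d, hd⟩
    have : r * w = p * (r * d) := by rw [hd]; ring
    rw [this, Nat.totient_mul_of_prime_of_dvd hp (hpd.mul_right d),
      IH d hdlt hd1 r (fun q hq hqd => hpr q hq (hqd.mul_left p |>.trans (by rw [hd]))), hd]
    ring

end aux


/-- if every prime divisor of `n` divides `q - 1` and (`8 ∤ n` or
`q ≢ 3 (mod 4)`), then with `κ = gcd(n,q-1)`, `m = n/κ`, `l = (q-1)/κ` and `θ` a
generator of `F_q^*`,
`X^n - 1 = ∏_{t ∣ m} ∏_{1 ≤ u ≤ κ, gcd(u,t)=1} (X^t - θ^{u·l})`,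
and each factor appearing in the product is irreducible over `F_q`. -/
theorem stmt_11 (F : Type) [Field F] [Fintype F] (q n : ℕ)
    (hq : Fintype.card F = q) (hn : 1 ≤ n)
    (hrad : ∀ p : ℕ, p.Prime → p ∣ n → p ∣ q - 1)
    (hcase : ¬(8 ∣ n) ∨ q % 4 ≠ 3)
    (θ : Fˣ) (hθ : ∀ a : Fˣ, a ∈ Subgroup.zpowers θ)
    (κ m l : ℕ) (hκ : κ = Nat.gcd n (q - 1)) (hm : m = n / κ) (hl : l = (q - 1) / κ) :
    (X ^ n - 1 : F[X]) =
      ∏ t ∈ m.divisors, ∏ u ∈ (Finset.Icc 1 κ).filter (fun u => Nat.Coprime u t),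
        (X ^ t - C ((θ : F) ^ (u * l))) ∧
    ∀ t ∈ m.divisors, ∀ u ∈ (Finset.Icc 1 κ).filter (fun u => Nat.Coprime u t),
      Irreducible (X ^ t - C ((θ : F) ^ (u * l))) := by
  have hq2 : 2 ≤ q := hq ▸ Fintype.one_lt_card
  have hκn : κ ∣ n := hκ ▸ Nat.gcd_dvd_left n (q - 1)
  have hκq : κ ∣ q - 1 := hκ ▸ Nat.gcd_dvd_right n (q - 1)
  have hκ0 : 0 < κ := by
    rw [hκ]; exact Nat.gcd_pos_of_pos_left _ hn
  have hnκm : n = κ * m := by rw [hm, Nat.mul_div_cancel' hκn]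
  have hq1κl : q - 1 = κ * l := by rw [hl, Nat.mul_div_cancel' hκq]
  have hm0 : 0 < m := Nat.pos_of_ne_zero (by rintro rfl; simp at hnκm; omega)
  have hl0 : 0 < l := Nat.pos_of_ne_zero (by rintro rfl; simp at hq1κl; omega)
  have hmn : m ∣ n := ⟨κ, by rw [hnκm]; ring⟩
  have hordθ : orderOf θ = q - 1 := by
    rw [orderOf_eq_card_of_forall_mem_zpowers hθ, Nat.card_units, Nat.card_eq_fintype_card, hq]
  have hordθF : orderOf ((θ : F)) = q - 1 := by rw [orderOf_units, hordθ]
  have hθF1 : (θ : F) ^ (q - 1) = 1 := by rw [← hordθF]; exact pow_orderOf_eq_one _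
  -- key arithmetic
  have hpm_not_l : ∀ p : ℕ, p.Prime → p ∣ m → ¬ p ∣ l := by
    intro p hp hpm hpl
    have h1 : κ * p ∣ n := by rw [hnκm]; exact mul_dvd_mul_left κ hpm
    have h2 : κ * p ∣ q - 1 := by rw [hq1κl]; exact mul_dvd_mul_left κ hpl
    have h3 : κ * p ∣ κ := by
      conv_rhs => rw [hκ]
      exact Nat.dvd_gcd h1 h2
    have h4 := Nat.le_of_dvd hκ0 h3
    have h5 : κ * 2 ≤ κ * p := Nat.mul_le_mul_left κ hp.two_le
    omega
  have hpm_κ : ∀ p : ℕ, p.Prime → p ∣ m → p ∣ κ := by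
    intro p hp hpm
    have hpn : p ∣ n := hpm.trans hmn
    rw [hκ]
    exact Nat.dvd_gcd hpn (hrad p hp hpn)
  -- irreducibility of the factors
  have hirr : ∀ t ∈ m.divisors, ∀ u ∈ (Finset.Icc 1 κ).filter (fun u => Nat.Coprime u t),
      Irreducible (X ^ t - C ((θ : F) ^ (u * l))) := by
    intro t htmem u humem
    obtain ⟨htm, -⟩ := Nat.mem_divisors.mp htmem
    have ht0 : 0 < t := Nat.pos_of_mem_divisors htmem
    obtain ⟨hu_icc, hcop⟩ := Finset.mem_filter.mp humem
    obtain ⟨hu1, huκ⟩ := Finset.mem_Icc.mp hu_icc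
    apply ffVC t F _ _ _ ht0
    · intro p hp hpt b hb
      have hpu : ¬ p ∣ u := by
        intro hpu
        have : p ∣ 1 := hcop ▸ Nat.dvd_gcd hpu hpt
        exact hp.one_lt.ne' (Nat.dvd_one.mp this)
      have hplnot : ¬ p ∣ l := hpm_not_l p hp (hpt.trans htm)
      have hpq1 : p ∣ q - 1 := hrad p hp ((hpt.trans htm).trans hmn)
      have hb0 : b ≠ 0 := by
        rintro rfl
        rw [zero_pow hp.ne_zero] at hb
        exact (pow_ne_zero (u * l) (Units.ne_zero θ)) hb.symm
      obtain ⟨j, hj⟩ := Subgroup.mem_zpowers_iff.mp (hθ (Units.mk0 b hb0))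
      have hβp : (Units.mk0 b hb0) ^ p = θ ^ (u * l) := by
        ext
        push_cast
        rw [Units.val_mk0]
        exact hb
      have hzp : θ ^ (j * (p : ℤ)) = θ ^ (((u * l : ℕ)) : ℤ) := by
        rw [zpow_mul, hj, zpow_natCast, zpow_natCast, hβp]
      have hmod := zpow_eq_zpow_iff_modEq.mp hzp
      rw [hordθ] at hmod
      have hdvd1 : ((q - 1 : ℕ) : ℤ) ∣ ((u * l : ℕ) : ℤ) - j * p := hmod.dvd
      have h6 : (p : ℤ) ∣ ((u * l : ℕ) : ℤ) - j * p :=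
        (Int.natCast_dvd_natCast.mpr hpq1).trans hdvd1
      have h7 : (p : ℤ) ∣ j * (p : ℤ) := dvd_mul_left _ _
      have h8 : (p : ℤ) ∣ ((u * l : ℕ) : ℤ) := by
        have := dvd_add h6 h7
        simpa using this
      have h9 : p ∣ u * l := Int.natCast_dvd_natCast.mp h8
      rcases (Nat.Prime.dvd_mul hp).mp h9 with h | h
      · exact hpu h
      · exact hplnot h
    · intro h4t
      have h2t : 2 ∣ t := dvd_trans ⟨2, rfl⟩ h4t
      have h2m : 2 ∣ m := h2t.trans htm
      have h2q1 : 2 ∣ q - 1 := hrad 2 Nat.prime_two (h2m.trans hmn)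
      rw [hq]
      by_contra h41
      have hq43 : q % 4 = 3 := by omega
      rcases hcase with h8 | h3
      · have h2l : ¬ 2 ∣ l := hpm_not_l 2 Nat.prime_two h2m
        have h2κ : 2 ∣ κ := by
          rcases (Nat.Prime.dvd_mul Nat.prime_two).mp (hq1κl ▸ h2q1) with h | h
          · exact h
          · exact absurd h h2l
        have h4m : 4 ∣ m := h4t.trans htm
        obtain ⟨a, ha⟩ := h2κ
        obtain ⟨b, hb⟩ := h4m
        exact h8 ⟨a * b, by rw [hnκm, ha, hb]; ring⟩
      · exact h3 hq43
  -- each factor divides X^n - 1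
  have hdvd : ∀ t ∈ m.divisors, ∀ u : ℕ,
      (X ^ t - C ((θ : F) ^ (u * l))) ∣ (X ^ n - 1 : F[X]) := by
    intro t htmem u
    obtain ⟨htm, -⟩ := Nat.mem_divisors.mp htmem
    have ht0 : 0 < t := Nat.pos_of_mem_divisors htmem
    set k := κ * (m / t) with hk
    have hmt : t * (m / t) = m := Nat.mul_div_cancel' htm
    have htk : n = t * k := by
      rw [hnκm, ← hmt, hk]
      ring
    have hck : ((θ : F) ^ (u * l)) ^ k = 1 := by
      rw [← pow_mul]
      have : u * l * k = (q - 1) * (u * (m / t)) := by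
        rw [hq1κl, hk]; ring
      rw [this, pow_mul, hθF1, one_pow]
    have key : (X ^ n - 1 : F[X]) = (X ^ t) ^ k - (C ((θ : F) ^ (u * l))) ^ k := by
      rw [← pow_mul, ← htk, ← C_pow, hck, map_one]
    rw [key]
    exact sub_dvd_pow_sub_pow _ _ _
  -- distinctness of factors
  have hinj : ∀ t ∈ m.divisors, ∀ t' ∈ m.divisors,
      ∀ u ∈ (Finset.Icc 1 κ).filter (fun u => Nat.Coprime u t),
      ∀ u' ∈ (Finset.Icc 1 κ).filter (fun u => Nat.Coprime u t'),
      (X ^ t - C ((θ : F) ^ (u * l))) = (X ^ t' - C ((θ : F) ^ (u' * l))) →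
      t = t' ∧ u = u' := by
    intro t htmem t' ht'mem u humem u' hu'mem heq
    have ht0 : 0 < t := Nat.pos_of_mem_divisors htmem
    have ht'0 : 0 < t' := Nat.pos_of_mem_divisors ht'mem
    obtain ⟨hu1, huκ⟩ := Finset.mem_Icc.mp (Finset.mem_filter.mp humem).1
    obtain ⟨hu'1, hu'κ⟩ := Finset.mem_Icc.mp (Finset.mem_filter.mp hu'mem).1
    have htt' : t = t' := by
      have := congrArg natDegree heq
      rwa [natDegree_X_pow_sub_C, natDegree_X_pow_sub_C] at this
    refine ⟨htt', ?_⟩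
    have hcc : (θ : F) ^ (u * l) = (θ : F) ^ (u' * l) := by
      have := congrArg (eval 0) heq
      rw [eval_sub, eval_sub, eval_pow, eval_pow, eval_X, eval_C, eval_C,
        zero_pow ht0.ne', zero_pow ht'0.ne', zero_sub, zero_sub, neg_inj] at this
      exact this
    have hccU : θ ^ (u * l) = θ ^ (u' * l) := by
      ext
      exact hcc
    have hmod : u * l ≡ u' * l [MOD q - 1] := by
      rw [← hordθ]
      exact pow_eq_pow_iff_modEq.mp hccU
    rw [hq1κl] at hmod
    have hmod2 : u ≡ u' [MOD κ] := Nat.ModEq.mul_right_cancel' hl0.ne' hmod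
    have hd : (κ : ℤ) ∣ (u' : ℤ) - (u : ℤ) := by
      have := hmod2.dvd
      simpa using this
    have habs : |(u' : ℤ) - (u : ℤ)| < (κ : ℤ) := by
      rw [abs_lt]
      constructor <;> [skip; skip] <;> push_cast <;> omega
    have := Int.eq_zero_of_abs_lt_dvd hd habs
    omega
  -- the product equality
  refine ⟨?_, hirr⟩
  classical
  set S := m.divisors.sigma
    (fun t => (Finset.Icc 1 κ).filter (fun u => Nat.Coprime u t)) with hS
  have hflat : (∏ t ∈ m.divisors, ∏ u ∈ (Finset.Icc 1 κ).filter (fun u => Nat.Coprime u t),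
      (X ^ t - C ((θ : F) ^ (u * l))) : F[X]) =
      ∏ p ∈ S, (X ^ p.1 - C ((θ : F) ^ (p.2 * l))) := by
    rw [hS, Finset.prod_sigma]
  have hmonicfac : ∀ p : (_ : ℕ) × ℕ, p ∈ S →
      Monic (X ^ p.1 - C ((θ : F) ^ (p.2 * l))) := by
    intro p hp
    have := Nat.pos_of_mem_divisors (Finset.mem_sigma.mp hp).1
    exact monic_X_pow_sub_C _ this.ne'
  have hprod_dvd : (∏ p ∈ S, (X ^ p.1 - C ((θ : F) ^ (p.2 * l)))) ∣ (X ^ n - 1 : F[X]) := by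
    apply Finset.prod_dvd_of_coprime
    · intro p hp p' hp' hne
      simp only [Finset.mem_coe] at hp hp'
      obtain ⟨hp1, hp2⟩ := Finset.mem_sigma.mp hp
      obtain ⟨hp'1, hp'2⟩ := Finset.mem_sigma.mp hp'
      have hne' : (X ^ p.1 - C ((θ : F) ^ (p.2 * l))) ≠ (X ^ p'.1 - C ((θ : F) ^ (p'.2 * l))) := by
        intro h
        obtain ⟨h1, h2⟩ := hinj p.1 hp1 p'.1 hp'1 p.2 hp2 p'.2 hp'2 h
        exact hne (Sigma.ext h1 (heq_of_eq h2))
      have hi := hirr p.1 hp1 p.2 hp2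
      have hi' := hirr p'.1 hp'1 p'.2 hp'2
      refine hi.coprime_iff_not_dvd.mpr (fun hdvd' => hne' ?_)
      exact eq_of_monic_of_associated (hmonicfac p hp) (hmonicfac p' hp')
        (hi.associated_of_dvd hi' hdvd')
    · intro p hp
      exact hdvd p.1 (Finset.mem_sigma.mp hp).1 p.2
  have hmonicP : Monic (∏ p ∈ S, (X ^ p.1 - C ((θ : F) ^ (p.2 * l)))) :=
    monic_prod_of_monic _ _ hmonicfac
  have hmonicL : Monic (X ^ n - 1 : F[X]) := by
    have : (X ^ n - 1 : F[X]) = X ^ n - C 1 := by rw [map_one]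
    rw [this]
    exact monic_X_pow_sub_C _ (by omega)
  -- degrees
  have hcount : ∀ t ∈ m.divisors,
      ((Finset.Icc 1 κ).filter (fun u => Nat.Coprime u t)).card * t = κ * t.totient := by
    intro t htmem
    obtain ⟨htm, -⟩ := Nat.mem_divisors.mp htmem
    have ht0 : 0 < t := Nat.pos_of_mem_divisors htmem
    set r := ∏ p ∈ t.primeFactors, p with hr
    have hrt : r ∣ t := Nat.prod_primeFactors_dvd t
    have hrκ : r ∣ κ := by
      apply Finset.prod_primes_dvd
      · intro p hp
        exact (Nat.prime_of_mem_primeFactors hp).prime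
      · intro p hp
        exact hpm_κ p (Nat.prime_of_mem_primeFactors hp)
          ((Nat.dvd_of_mem_primeFactors hp).trans htm)
    have hr0 : 0 < r := Finset.prod_pos (fun p hp => (Nat.prime_of_mem_primeFactors hp).pos)
    have hset : Finset.Icc 1 κ = Finset.Ico 1 (1 + (κ / r) * r) := by
      rw [Nat.div_mul_cancel hrκ, ← Finset.Ico_add_one_right_eq_Icc]
      congr 1
      omega
    have hfil : (Finset.Icc 1 κ).filter (fun u => Nat.Coprime u t)
        = (Finset.Ico 1 (1 + (κ / r) * r)).filter (fun u => r.Coprime u) := by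
      rw [hset]
      exact Finset.filter_congr (fun u _ => by rw [coprime_radical_iff t u ht0.ne'])
    rw [hfil, count_blocks]
    obtain ⟨w, hw⟩ := hrt
    have hw0 : 0 < w := Nat.pos_of_ne_zero (by rintro rfl; simp at hw; omega)
    have htot : t.totient = w * r.totient := by
      rw [hw]
      exact totient_aux w hw0 r (fun p hp hpw => by
        have hpt : p ∣ t := hw ▸ hpw.mul_left r
        exact Finset.dvd_prod_of_mem _ (Nat.mem_primeFactors.mpr ⟨hp, hpt, ht0.ne'⟩))
    have hκr : κ / r * r = κ := Nat.div_mul_cancel hrκ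
    calc κ / r * r.totient * t = κ / r * r.totient * (r * w) := by rw [← hw]
      _ = (κ / r * r) * (w * r.totient) := by ring
      _ = κ * t.totient := by rw [hκr, htot]
  have hdegP : (∏ p ∈ S, (X ^ p.1 - C ((θ : F) ^ (p.2 * l)))).natDegree = n := by
    rw [natDegree_prod _ _ (fun p hp => (hmonicfac p hp).ne_zero)]
    have : ∀ p : (_ : ℕ) × ℕ, p ∈ S → (X ^ p.1 - C ((θ : F) ^ (p.2 * l))).natDegree = p.1 :=
      fun p _ => natDegree_X_pow_sub_C
    rw [Finset.sum_congr rfl this, hS, Finset.sum_sigma]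
    have : ∀ t ∈ m.divisors,
        (∑ _u ∈ (Finset.Icc 1 κ).filter (fun u => Nat.Coprime u t), t) = κ * t.totient := by
      intro t htmem
      rw [Finset.sum_const, smul_eq_mul]
      exact hcount t htmem
    rw [Finset.sum_congr rfl this, ← Finset.mul_sum, Nat.sum_totient, ← hnκm]
  have hdegL : (X ^ n - 1 : F[X]).natDegree = n := by
    have : (X ^ n - 1 : F[X]) = X ^ n - C 1 := by rw [map_one]
    rw [this, natDegree_X_pow_sub_C]
  rw [hflat]
  have hassoc : Associated (∏ p ∈ S, (X ^ p.1 - C ((θ : F) ^ (p.2 * l)))) (X ^ n - 1 : F[X]) :=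
    associated_of_dvd_of_natDegree_le hprod_dvd hmonicL.ne_zero (by rw [hdegL, hdegP])
  exact (eq_of_monic_of_associated hmonicP hmonicL hassoc).symm
end

section
/- Let F_q be a finite field with q elements and let n ≥ 1 be such that every prime divisor of n divides q − 1 and such that 8 ∤ n or q ≢ 3 (mod 4). Set κ = gcd(n, q − 1) and m = n/κ. Then for every positive integer t, the number of distinct monic irreducible factors of x^n − 1 in F_q[x] of degree t equals φ(t)·κ/t if t divides m, and equals 0 otherwise, where φ is Euler's totient function. -/
/-!
The monic irreducible factors of `X ^ n - 1` of degree dividing `s` are exactly those of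
`gcd (X ^ n - 1, X ^ (q ^ s) - X) = X ^ gcd(n, q ^ s - 1) - 1`, a squarefree polynomial, so their
degrees add up to `gcd(n, q ^ s - 1)`. Under the hypotheses on `n`, lifting the exponent gives
`gcd(n, q ^ s - 1) = κ * gcd(m, s)`. Hence, writing `N d` for the number of factors of degree `d`,
`∑_{d ∣ s} d * N d = κ * s = ∑_{d ∣ s} κ * φ d` for every `s ∣ m`, which forces `t * N t = κ * φ t`;
and every factor divides `X ^ (q ^ m) - X`, so its degree divides `m`.
-/

open Polynomial Finset

lemma padicValNat_two_pow_sub_one_of_odd {q s : ℕ} (hq : 1 < q) (hq2 : ¬2 ∣ q) (hs : ¬2 ∣ s) :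
    padicValNat 2 (q ^ s - 1) = padicValNat 2 (q - 1) := by
  have hz := emultiplicity_pow_sub_pow_of_prime Int.prime_two (x := (q : ℤ)) (y := 1)
    (by omega) (by omega) (n := s) (by omega)
  have hqs : 1 < q ^ s := Nat.one_lt_pow (by omega) hq
  rw [one_pow, ← Nat.cast_one (R := ℤ), ← Nat.cast_pow, ← Nat.cast_sub hqs.le,
    ← Nat.cast_sub hq.le, show (2 : ℤ) = ((2 : ℕ) : ℤ) from rfl, Int.natCast_emultiplicity,
    Int.natCast_emultiplicity, ← padicValNat_eq_emultiplicity (by omega),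
    ← padicValNat_eq_emultiplicity (by omega)] at hz
  exact_mod_cast hz

lemma min_padicValNat_pow_sub_one {p q s a : ℕ} [hp : Fact p.Prime] (hq : 1 < q)
    (hpq : p ∣ q - 1) (hs : s ≠ 0) (h : p ≠ 2 ∨ q % 4 ≠ 3 ∨ a ≤ 2) :
    min a (padicValNat p (q ^ s - 1)) = min a (padicValNat p (q - 1) + padicValNat p s) := by
  rcases hp.out.eq_two_or_odd' with rfl | hodd
  · by_cases hs2 : 2 ∣ s
    · have hlte := padicValNat.pow_two_sub_one hq (by omega) hs (even_iff_two_dvd.mpr hs2)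
      have hge := padicValNat.pow_two_sub_one_ge hq (by omega) hs (even_iff_two_dvd.mpr hs2)
      have hq1 : 1 ≤ padicValNat 2 (q - 1) := one_le_padicValNat_of_dvd (by omega) hpq
      have hs1 : 1 ≤ padicValNat 2 s := one_le_padicValNat_of_dvd hs hs2
      have hqp : 1 ≤ padicValNat 2 (q + 1) := one_le_padicValNat_of_dvd (by omega) (by omega)
      by_cases hq4 : q % 4 = 3
      -- here lifting the exponent fails, but both sides equal `a ≤ 2`
      · rw [min_eq_left (by omega), min_eq_left (by omega)]
      · have : ¬ 2 ^ 2 ∣ q + 1 := by omega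
        rw [padicValNat_dvd_iff_le (by omega)] at this
        omega
    · rw [padicValNat_two_pow_sub_one_of_odd hq (by omega) hs2,
        padicValNat.eq_zero_of_not_dvd hs2, add_zero]
  · have hpq' : ¬p ∣ q := fun hpq' ↦ hp.out.one_lt.ne' (Nat.dvd_one.mp (by
      simpa [Nat.sub_sub_self hq.le] using Nat.dvd_sub hpq' hpq))
    have hlte := padicValNat.pow_sub_pow hodd hq (by simpa using hpq) hpq' hs
    rw [one_pow] at hlte
    rw [hlte]

theorem gcd_pow_sub_one_eq {q n s : ℕ} (hq : 1 < q) (hn : n ≠ 0) (hs : s ≠ 0)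
    (hrad : ∀ p : ℕ, p.Prime → p ∣ n → p ∣ q - 1) (hcase : ¬8 ∣ n ∨ q % 4 ≠ 3) :
    n.gcd (q ^ s - 1) = n.gcd (q - 1) * (n / n.gcd (q - 1)).gcd s := by
  have hq0 : q - 1 ≠ 0 := by omega
  have hqs0 : q ^ s - 1 ≠ 0 := by have := Nat.one_lt_pow hs hq; omega
  have hκ0 : n.gcd (q - 1) ≠ 0 := Nat.gcd_ne_zero_left hn
  have hm0 : n / n.gcd (q - 1) ≠ 0 :=
    (Nat.div_ne_zero_iff_of_dvd (Nat.gcd_dvd_left _ _)).mpr ⟨hn, hκ0⟩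
  refine Nat.eq_of_factorization_eq (Nat.gcd_ne_zero_left hn)
    (mul_ne_zero hκ0 (Nat.gcd_ne_zero_left hm0)) fun p ↦ ?_
  by_cases hp : p.Prime
  swap
  · simp [Nat.factorization_eq_zero_of_not_prime _ hp]
  have := Fact.mk hp
  simp only [Nat.factorization_mul hκ0 (Nat.gcd_ne_zero_left hm0),
    Nat.factorization_div (Nat.gcd_dvd_left _ _), Nat.factorization_gcd hn hqs0,
    Nat.factorization_gcd hn hq0, Nat.factorization_gcd hm0 hs, Finsupp.add_apply,
    Finsupp.tsub_apply, Finsupp.inf_apply, Nat.factorization_def _ hp]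
  by_cases hpn : p ∣ n
  · have hexc : p ≠ 2 ∨ q % 4 ≠ 3 ∨ padicValNat p n ≤ 2 := by
      rcases hcase with h8 | h4
      · by_cases hp2 : p = 2
        · subst hp2
          refine Or.inr (Or.inr (not_lt.mp fun h3 ↦ h8 ?_))
          exact (padicValNat_dvd_iff_le (p := 2) (n := 3) hn).mpr h3
        · exact Or.inl hp2
      · exact Or.inr (Or.inl h4)
    have := min_padicValNat_pow_sub_one hq (hrad p hp hpn) hs hexc
    omega
  · simp [padicValNat.eq_zero_of_not_dvd hpn]

theorem Nat.eq_of_sum_divisors_eq {f g : ℕ → ℕ} {m : ℕ} (hm : m ≠ 0)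
    (h : ∀ s, s ∣ m → ∑ d ∈ s.divisors, f d = ∑ d ∈ s.divisors, g d) {t : ℕ} (ht : t ∣ m) :
    f t = g t := by
  induction t using Nat.strong_induction_on with
  | _ t ih =>
    have ht0 : t ≠ 0 := ne_zero_of_dvd_ne_zero hm ht
    have hproper : ∑ d ∈ t.properDivisors, f d = ∑ d ∈ t.properDivisors, g d :=
      sum_congr rfl fun d hd ↦ ih d (Nat.mem_properDivisors.mp hd).2
        ((Nat.mem_properDivisors.mp hd).1.trans ht)
    have := h t ht
    rw [← Nat.cons_self_properDivisors ht0, sum_cons, sum_cons, hproper] at this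
    exact Nat.add_right_cancel this

theorem Finset.sum_filter_dvd_eq_sum_divisors {α : Type*} (S : Finset α) (g : α → ℕ) {s : ℕ}
    (hs : s ≠ 0) : ∑ x ∈ S with g x ∣ s, g x = ∑ d ∈ s.divisors, d * #{x ∈ S | g x = d} := by
  classical
  rw [← sum_fiberwise_of_maps_to (t := s.divisors) (g := g)
    fun x hx ↦ Nat.mem_divisors.mpr ⟨(mem_filter.mp hx).2, hs⟩]
  refine sum_congr rfl fun d hd ↦ ?_
  rw [filter_filter, sum_const_nat fun x hx ↦ (mem_filter.mp hx).2.2, mul_comm]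
  congr 2
  exact filter_congr fun x _ ↦ and_iff_right_of_imp fun h ↦ h ▸ Nat.dvd_of_mem_divisors hd

namespace Polynomial

variable {R : Type*} [CommRing R]

theorem dvd_X_pow_sub_one_iff (f : R[X]) (k : ℕ) :
    f ∣ X ^ k - 1 ↔ AdjoinRoot.root f ^ k = 1 := by
  rw [← AdjoinRoot.mk_eq_zero, map_sub, map_pow, AdjoinRoot.mk_X, map_one, sub_eq_zero]

theorem dvd_X_pow_gcd_sub_one_iff (f : R[X]) (a b : ℕ) :
    f ∣ X ^ a.gcd b - 1 ↔ f ∣ X ^ a - 1 ∧ f ∣ X ^ b - 1 := by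
  simp only [dvd_X_pow_sub_one_iff, pow_gcd_eq_one]

theorem dvd_X_pow_succ_sub_X_iff {f : R[X]} {n : ℕ} (hn : n ≠ 0) (hf : f ∣ X ^ n - 1) (k : ℕ) :
    f ∣ X ^ (k + 1) - X ↔ f ∣ X ^ k - 1 := by
  have hunit : IsUnit (AdjoinRoot.root f) :=
    IsUnit.of_pow_eq_one ((dvd_X_pow_sub_one_iff f n).mp hf) hn
  rw [dvd_X_pow_sub_one_iff, ← AdjoinRoot.mk_eq_zero, map_sub, map_pow, AdjoinRoot.mk_X,
    sub_eq_zero, pow_succ, hunit.mul_eq_right]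

open UniqueFactorizationMonoid

variable {K : Type*} [Field K]

theorem sum_natDegree_normalizedFactors [DecidableEq K] {P : K[X]} (hP : P ≠ 0)
    (hsf : Squarefree P) : ∑ f ∈ (normalizedFactors P).toFinset, f.natDegree = P.natDegree := by
  rw [sum_eq_multiset_sum, Multiset.toFinset_val,
    ((squarefree_iff_nodup_normalizedFactors hP).mp hsf).dedup,
    ← natDegree_multiset_prod _ (zero_notMem_normalizedFactors _)]
  exact natDegree_eq_of_degree_eq (degree_eq_degree_of_associated (prod_normalizedFactors hP))

theorem _root_.Irreducible.natDegree_dvd_iff_dvd_X_pow_gcd_sub_one [Fintype K] {f : K[X]}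
    (hf : Irreducible f) {n : ℕ} (hn : n ≠ 0) (hfn : f ∣ X ^ n - 1) (s : ℕ) :
    f.natDegree ∣ s ↔ f ∣ X ^ n.gcd (Fintype.card K ^ s - 1) - 1 := by
  have hqs : Fintype.card K ^ s - 1 + 1 = Fintype.card K ^ s :=
    Nat.sub_add_cancel (Nat.one_le_pow _ _ Fintype.card_pos)
  rw [hf.natDegree_dvd_iff_dvd_X_pow_card_pow_sub_X, Nat.card_eq_fintype_card, ← hqs,
    dvd_X_pow_succ_sub_X_iff hn hfn, dvd_X_pow_gcd_sub_one_iff, and_iff_right hfn, hqs]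

theorem sum_natDegree_normalizedFactors_X_pow_sub_one_filter_dvd [Fintype K] [DecidableEq K]
    {n : ℕ} (hn : (n : K) ≠ 0) (s : ℕ) :
    ∑ f ∈ (normalizedFactors (X ^ n - 1 : K[X])).toFinset with f.natDegree ∣ s, f.natDegree =
      n.gcd (Fintype.card K ^ s - 1) := by
  set g := n.gcd (Fintype.card K ^ s - 1)
  have hn0 : n ≠ 0 := by rintro rfl; simp at hn
  have hg : (g : K) ≠ 0 := fun hg ↦ hn <| by
    obtain ⟨c, hc⟩ := Nat.gcd_dvd_left n (Fintype.card K ^ s - 1)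
    rw [hc, Nat.cast_mul, hg, zero_mul]
  have hsep : (X ^ g - 1 : K[X]).Separable := X_pow_sub_one_separable_iff.mpr hg
  have hfactors : {f ∈ (normalizedFactors (X ^ n - 1 : K[X])).toFinset | f.natDegree ∣ s} =
      (normalizedFactors (X ^ g - 1 : K[X])).toFinset := by
    ext f
    simp only [mem_filter, Multiset.mem_toFinset, Polynomial.mem_normalizedFactors_iff hsep.ne_zero,
      Polynomial.mem_normalizedFactors_iff (X_pow_sub_one_separable_iff.mpr hn).ne_zero]
    constructor
    · rintro ⟨⟨hirr, hmon, hfn⟩, hdeg⟩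
      exact ⟨hirr, hmon, (hirr.natDegree_dvd_iff_dvd_X_pow_gcd_sub_one hn0 hfn s).mp hdeg⟩
    · rintro ⟨hirr, hmon, hfg⟩
      have hfn := ((dvd_X_pow_gcd_sub_one_iff f _ _).mp hfg).1
      exact ⟨⟨hirr, hmon, hfn⟩, (hirr.natDegree_dvd_iff_dvd_X_pow_gcd_sub_one hn0 hfn s).mpr hfg⟩
  rw [hfactors, sum_natDegree_normalizedFactors hsep.ne_zero hsep.squarefree, ← C_1,
    natDegree_X_pow_sub_C]

end Polynomial

theorem FiniteField.natCast_ne_zero_of_forall_prime_dvd_card_sub_one {K : Type*} [Field K]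
    [Fintype K] {n : ℕ} (h : ∀ p : ℕ, p.Prime → p ∣ n → p ∣ Fintype.card K - 1) :
    (n : K) ≠ 0 := by
  intro hn
  have hp := CharP.char_is_prime K (ringChar K)
  have hpq : ringChar K ∣ Fintype.card K := (ringChar.spec K _).mp (Nat.cast_card_eq_zero K)
  have h1 := Nat.dvd_sub hpq (h _ hp ((ringChar.spec K n).mp hn))
  rw [Nat.sub_sub_self Fintype.card_pos] at h1
  exact hp.one_lt.ne' (Nat.dvd_one.mp h1)

/-- if every prime divisor of `n` divides `q - 1` and (`8 ∤ n` or
`q ≢ 3 (mod 4)`), then with `κ = gcd(n,q-1)` and `m = n/κ`, for every `t ≥ 1` the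
number of distinct monic irreducible factors of `X^n - 1` of degree `t` is
`φ(t)·κ/t` if `t ∣ m` and `0` otherwise. -/
theorem stmt_12 (F : Type) [Field F] [Fintype F] (q n : ℕ)
    (hq : Fintype.card F = q) (hn : 1 ≤ n)
    (hrad : ∀ p : ℕ, p.Prime → p ∣ n → p ∣ q - 1)
    (hcase : ¬(8 ∣ n) ∨ q % 4 ≠ 3)
    (κ m : ℕ) (hκ : κ = Nat.gcd n (q - 1)) (hm : m = n / κ) :
    ∀ t : ℕ, 1 ≤ t →
      {f : F[X] | f.Monic ∧ Irreducible f ∧ f ∣ X ^ n - 1 ∧ f.natDegree = t}.ncard =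
        if t ∣ m then Nat.totient t * κ / t else 0 := by
  intro t ht
  classical
  subst hq
  have hq1 : 1 < Fintype.card F := Fintype.one_lt_card
  have hn0 : n ≠ 0 := by omega
  have hnF : (n : F) ≠ 0 := FiniteField.natCast_ne_zero_of_forall_prime_dvd_card_sub_one hrad
  have hκm : κ * m = n := by rw [hm, hκ]; exact Nat.mul_div_cancel' (Nat.gcd_dvd_left _ _)
  have hm0 : m ≠ 0 := by rintro rfl; omega
  have hgcd : ∀ s, s ≠ 0 → n.gcd (Fintype.card F ^ s - 1) = κ * m.gcd s := fun s hs ↦ by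
    subst hm hκ; exact gcd_pow_sub_one_eq hq1 hn0 hs hrad hcase
  set S := (UniqueFactorizationMonoid.normalizedFactors (X ^ n - 1 : F[X])).toFinset
  have hS : ∀ f, f ∈ S ↔ Irreducible f ∧ f.Monic ∧ f ∣ X ^ n - 1 := fun f ↦ by
    rw [Multiset.mem_toFinset, Polynomial.mem_normalizedFactors_iff
      (X_pow_sub_one_separable_iff.mpr hnF).ne_zero]
  have hset : {f : F[X] | f.Monic ∧ Irreducible f ∧ f ∣ X ^ n - 1 ∧ f.natDegree = t} =
      ↑{f ∈ S | f.natDegree = t} := by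
    ext f
    simp only [Set.mem_ofPred_eq, coe_filter, hS]
    tauto
  rw [hset, Set.ncard_coe_finset]
  split_ifs with htm
  · have hsum : ∀ s, s ∣ m → ∑ d ∈ s.divisors, d * #{f ∈ S | f.natDegree = d} =
        ∑ d ∈ s.divisors, Nat.totient d * κ := fun s hs ↦ by
      have hs0 : s ≠ 0 := ne_zero_of_dvd_ne_zero hm0 hs
      rw [← sum_filter_dvd_eq_sum_divisors _ _ hs0,
        sum_natDegree_normalizedFactors_X_pow_sub_one_filter_dvd hnF, hgcd s hs0,
        Nat.gcd_eq_right hs, ← sum_mul, Nat.sum_totient, mul_comm]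
    rw [← Nat.eq_of_sum_divisors_eq hm0 hsum htm, Nat.mul_div_cancel_left _ (by omega)]
  · rw [card_eq_zero, filter_eq_empty_iff]
    intro f hf hdeg
    obtain ⟨hirr, -, hfn⟩ := (hS f).mp hf
    refine htm (hdeg ▸ (hirr.natDegree_dvd_iff_dvd_X_pow_gcd_sub_one hn0 hfn m).mpr ?_)
    rwa [hgcd m hm0, Nat.gcd_self, hκm]
end
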